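/- The scattering function satisfies the identity and two-sided bound 0 ≤ 𝔞₀^μ − ∫₀^∞ f'(r)² r² dr = (1/μ)∫₀^{R₀} v(r) f(r)² r² dr ≤ (𝔞₀^μ/R₀)(𝔠₀ − 𝔞₀^μ). Equivalently, for the radial function f(x) := f(|x|) on ℝ³: 0 ≤ 𝔞₀^μ − (1/4π)∫_{ℝ³} |∇f(x)|² dx = (1/(4πμ))∫_{ℝ³} v(|x|) f(x)² dx ≤ (𝔞₀^μ/R₀)(𝔠₀ − 𝔞₀^μ). -/

import Mathlib

open Set MeasureTheory

/-- A zero-energy scattering solution `m` for the radial potential `v` supported in `[0, R₀]`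
with semiclassical parameter `μ`: it satisfies `μ m'' = v m` on `(0,∞)`, is continuous on
`[0,∞)` and continuously differentiable on `(0,∞)`, with `m(0) = 0`, `m > 0` on `(0,∞)`, and
`m(r) = r - 𝔞₀^μ` for `r ≥ R₀`, where `𝔞₀^μ := R₀ - m(R₀)` is the scattering length. -/
structure ZeroEnergyScattering (v : ℝ → ℝ) (R₀ μ : ℝ) (m : ℝ → ℝ) : Prop where
  cont : ContinuousOn m (Set.Ici 0)
  diff : ∀ r ∈ Set.Ioi (0 : ℝ), DifferentiableAt ℝ m r
  derivCont : ContinuousOn (deriv m) (Set.Ioi 0)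
  diff2 : ∀ r ∈ Set.Ioi (0 : ℝ), DifferentiableAt ℝ (deriv m) r
  ode : ∀ r ∈ Set.Ioi (0 : ℝ), μ * deriv (deriv m) r = v r * m r
  zero : m 0 = 0
  pos : ∀ r ∈ Set.Ioi (0 : ℝ), 0 < m r
  radiation : ∀ r, R₀ ≤ r → m r = r - (R₀ - m R₀)

/-!
Put `a = R₀ - m(R₀)` and `Φ(r) = m m' - m²/r`. A direct computation with `μ m'' = v m` gives
`Φ' = f'² r² + (1/μ) v f² r² ≥ 0`. Since `v, m ≥ 0`, `m` is convex, so
`0 ≤ m' - m/r ≤ m' ≤ m'(R₀) = 1` on `(0, R₀]`; hence `|Φ| ≤ |m| → 0` at the origin, while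
`Φ(r) = a - a²/r → a` at infinity. Integrating `Φ'` over `(0, ∞)` gives the identity, over
`(0, R₀]` it gives the upper bound `Φ(R₀) = a - a²/R₀`. Polar coordinates in `ℝ³` turn the
radial integrals into the spatial ones.
-/

open Filter Real Topology

/-- With `f = m / r` this is `r² f f'`. -/
noncomputable def radialFlux (m : ℝ → ℝ) (r : ℝ) : ℝ := m r * deriv m r - m r ^ 2 / r

lemma radialFlux_eq_mul (m : ℝ → ℝ) (r : ℝ) :
    radialFlux m r = m r * (deriv m r - m r / r) := by
  unfold radialFlux; ring

lemma deriv_div_id_mul_self {m : ℝ → ℝ} {r : ℝ} (hm : DifferentiableAt ℝ m r) (hr : r ≠ 0) :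
    deriv (fun s => m s / s) r * r = deriv m r - m r / r := by
  have h : HasDerivAt (fun s => m s / s) ((deriv m r * r - m r * 1) / r ^ 2) r :=
    hm.hasDerivAt.div (hasDerivAt_id' r) hr
  rw [h.deriv]
  field_simp

lemma hasDerivAt_radialFlux {m : ℝ → ℝ} {m'' r : ℝ} (hm : DifferentiableAt ℝ m r)
    (hm' : HasDerivAt (deriv m) m'' r) (hr : r ≠ 0) :
    HasDerivAt (radialFlux m) ((deriv (fun s => m s / s) r) ^ 2 * r ^ 2 + m r * m'') r := by
  have h : HasDerivAt (radialFlux m) _ r :=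
    (hm.hasDerivAt.mul hm').sub ((hm.hasDerivAt.pow 2).div (hasDerivAt_id' r) hr)
  refine h.congr_deriv ?_
  rw [Pi.pow_apply, ← mul_pow, deriv_div_id_mul_self hm hr]
  field_simp
  ring

lemma setIntegral_Ioi_eq_setIntegral_Ioc {g : ℝ → ℝ} {a b : ℝ} (hg : ∀ r, b < r → g r = 0) :
    ∫ r in Ioi a, g r = ∫ r in Ioc a b, g r :=
  setIntegral_eq_of_subset_of_forall_sdiff_eq_zero measurableSet_Ioi Ioc_subset_Ioi_self
    fun r hr => hg r (lt_of_not_ge fun h => hr.2 ⟨hr.1, h⟩)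

namespace ZeroEnergyScattering

variable {v : ℝ → ℝ} {R₀ μ : ℝ} {m : ℝ → ℝ}

lemma radialFlux_zero (hm : ZeroEnergyScattering v R₀ μ m) : radialFlux m 0 = 0 := by
  simp [radialFlux, hm.zero]

lemma hasDerivAt_deriv (hm : ZeroEnergyScattering v R₀ μ m) (hμ : μ ≠ 0) {r : ℝ} (hr : 0 < r) :
    HasDerivAt (deriv m) (v r * m r / μ) r := by
  have h := (hm.diff2 r hr).hasDerivAt
  rwa [show deriv (deriv m) r = v r * m r / μ by rw [eq_div_iff hμ, mul_comm, hm.ode r hr]] at h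

lemma deriv_eq_one (hm : ZeroEnergyScattering v R₀ μ m) (hR₀ : 0 < R₀) {r : ℝ} (hr : R₀ ≤ r) :
    deriv m r = 1 := by
  have hlin : HasDerivWithinAt m 1 (Ici r) r :=
    ((hasDerivAt_id r).sub_const (R₀ - m R₀)).hasDerivWithinAt.congr
      (fun s hs => hm.radiation s (hr.trans hs)) (hm.radiation r hr)
  exact (uniqueDiffWithinAt_Ici r).eq_deriv _
    (hm.diff r (hR₀.trans_le hr)).hasDerivAt.hasDerivWithinAt hlin

lemma monotoneOn_deriv (hm : ZeroEnergyScattering v R₀ μ m) (hμ : 0 < μ) (hv : ∀ r, 0 ≤ v r) :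
    MonotoneOn (deriv m) (Ioi 0) := by
  refine monotoneOn_of_deriv_nonneg (convex_Ioi 0) hm.derivCont ?_ ?_ <;> rw [interior_Ioi]
  · exact fun r hr => (hm.diff2 r hr).differentiableWithinAt
  · intro r hr
    rw [(hm.hasDerivAt_deriv hμ.ne' hr).deriv]
    exact div_nonneg (mul_nonneg (hv r) (hm.pos r hr).le) hμ.le

lemma div_le_deriv (hm : ZeroEnergyScattering v R₀ μ m) (hμ : 0 < μ) (hv : ∀ r, 0 ≤ v r)
    {r : ℝ} (hr : 0 < r) : m r / r ≤ deriv m r := by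
  obtain ⟨c, hc, hslope⟩ := exists_deriv_eq_slope m hr (hm.cont.mono Icc_subset_Ici_self)
    fun s hs => (hm.diff s hs.1).differentiableWithinAt
  rw [hm.zero, sub_zero, sub_zero] at hslope
  exact hslope ▸ hm.monotoneOn_deriv hμ hv hc.1 hr hc.2.le

lemma deriv_le_one (hm : ZeroEnergyScattering v R₀ μ m) (hR₀ : 0 < R₀) (hμ : 0 < μ)
    (hv : ∀ r, 0 ≤ v r) {r : ℝ} (hr : 0 < r) : deriv m r ≤ 1 := by
  rcases le_total r R₀ with h | h
  · exact hm.deriv_eq_one hR₀ le_rfl ▸ hm.monotoneOn_deriv hμ hv hr hR₀ h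
  · exact (hm.deriv_eq_one hR₀ h).le

lemma abs_radialFlux_le (hm : ZeroEnergyScattering v R₀ μ m) (hR₀ : 0 < R₀) (hμ : 0 < μ)
    (hv : ∀ r, 0 ≤ v r) {r : ℝ} (hr : 0 ≤ r) : |radialFlux m r| ≤ |m r| := by
  rcases hr.eq_or_lt with rfl | hr
  · simp [hm.radialFlux_zero, hm.zero]
  have hlow := hm.div_le_deriv hμ hv hr
  have hup : deriv m r - m r / r ≤ 1 := by
    linarith [hm.deriv_le_one hR₀ hμ hv hr, div_pos (hm.pos r hr) hr]
  rw [radialFlux_eq_mul, abs_mul]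
  exact mul_le_of_le_one_right (abs_nonneg _) (abs_le.2 ⟨by linarith, hup⟩)

lemma hasDerivAt_radialFlux_of_pos (hm : ZeroEnergyScattering v R₀ μ m) (hμ : μ ≠ 0) {r : ℝ}
    (hr : 0 < r) :
    HasDerivAt (radialFlux m)
      ((deriv (fun s => m s / s) r) ^ 2 * r ^ 2 + 1 / μ * (v r * (m r / r) ^ 2 * r ^ 2)) r := by
  convert hasDerivAt_radialFlux (hm.diff r hr) (hm.hasDerivAt_deriv hμ hr) hr.ne' using 2
  field_simp

lemma continuousOn_radialFlux (hm : ZeroEnergyScattering v R₀ μ m) (hR₀ : 0 < R₀) (hμ : 0 < μ)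
    (hv : ∀ r, 0 ≤ v r) : ContinuousOn (radialFlux m) (Ici 0) := by
  intro r hr
  rcases (mem_Ici.1 hr).eq_or_lt with rfl | hr
  · have hm0 := (hm.cont 0 self_mem_Ici).tendsto
    rw [hm.zero] at hm0
    rw [ContinuousWithinAt, hm.radialFlux_zero]
    refine squeeze_zero_norm' (a := fun r => |m r|)
      (eventually_nhdsWithin_of_forall fun r hr => hm.abs_radialFlux_le hR₀ hμ hv hr) ?_
    simpa using hm0.abs
  · exact (hm.hasDerivAt_radialFlux_of_pos hμ.ne' hr).continuousAt.continuousWithinAt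

lemma radialFlux_eq_of_le (hm : ZeroEnergyScattering v R₀ μ m) (hR₀ : 0 < R₀) {r : ℝ}
    (hr : R₀ ≤ r) : radialFlux m r = (R₀ - m R₀) - (R₀ - m R₀) ^ 2 / r := by
  have hr0 : r ≠ 0 := (hR₀.trans_le hr).ne'
  rw [radialFlux, hm.deriv_eq_one hR₀ hr, hm.radiation r hr]
  field_simp
  ring

lemma tendsto_radialFlux_atTop (hm : ZeroEnergyScattering v R₀ μ m) (hR₀ : 0 < R₀) :
    Tendsto (radialFlux m) atTop (𝓝 (R₀ - m R₀)) := by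
  have h : Tendsto (fun r => (R₀ - m R₀) - (R₀ - m R₀) ^ 2 / r) atTop (𝓝 ((R₀ - m R₀) - 0)) :=
    tendsto_const_nhds.sub (tendsto_id.const_div_atTop _)
  rw [sub_zero] at h
  exact h.congr' ((eventually_ge_atTop R₀).mono fun r hr => (hm.radialFlux_eq_of_le hR₀ hr).symm)

theorem radial_energy_identity (hm : ZeroEnergyScattering v R₀ μ m) (hR₀ : 0 < R₀) (hμ : 0 < μ)
    (hv : ∀ r, 0 ≤ v r) (hv_supp : ∀ r, R₀ ≤ r → v r = 0) :
    (R₀ - m R₀) - ∫ r in Ioi 0, (deriv (fun s => m s / s) r) ^ 2 * r ^ 2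
      = 1 / μ * ∫ r in Ioc 0 R₀, v r * (m r / r) ^ 2 * r ^ 2 ∧
    1 / μ * ∫ r in Ioc 0 R₀, v r * (m r / r) ^ 2 * r ^ 2
      ≤ (R₀ - m R₀) / R₀ * (R₀ - (R₀ - m R₀)) := by
  set P : ℝ → ℝ := fun r => (deriv (fun s => m s / s) r) ^ 2 * r ^ 2
  set V : ℝ → ℝ := fun r => 1 / μ * (v r * (m r / r) ^ 2 * r ^ 2) with hV
  have hderiv : ∀ r ∈ Ioi (0 : ℝ), HasDerivAt (radialFlux m) (P r + V r) r :=
    fun r hr => hm.hasDerivAt_radialFlux_of_pos hμ.ne' hr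
  have hV_nonneg : ∀ r, 0 ≤ V r := fun r => by have := hv r; positivity
  have hderiv_nonneg : ∀ r ∈ Ioi (0 : ℝ), 0 ≤ P r + V r :=
    fun r _ => add_nonneg (by positivity) (hV_nonneg r)
  have hcont := hm.continuousOn_radialFlux hR₀ hμ hv
  have hlim := hm.tendsto_radialFlux_atTop hR₀
  have hint : IntegrableOn (fun r => P r + V r) (Ioi 0) :=
    integrableOn_Ioi_deriv_of_nonneg (hcont 0 self_mem_Ici) hderiv hderiv_nonneg hlim
  have hP_int : IntegrableOn P (Ioi 0) := by
    refine hint.mono' (by fun_prop) (ae_restrict_of_forall_mem measurableSet_Ioi fun r _ => ?_)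
    rw [Real.norm_of_nonneg (by positivity)]
    exact le_add_of_nonneg_right (hV_nonneg r)
  have hV_int : IntegrableOn V (Ioi 0) :=
    (hint.sub hP_int).congr_fun (fun r _ => add_sub_cancel_left _ _) measurableSet_Ioi
  have htotal : ∫ r in Ioi 0, (P r + V r) = R₀ - m R₀ := by
    rw [integral_Ioi_of_hasDerivAt_of_nonneg (hcont 0 self_mem_Ici) hderiv hderiv_nonneg hlim,
      hm.radialFlux_zero, sub_zero]
  have hinner : ∫ r in Ioc 0 R₀, (P r + V r) = radialFlux m R₀ := by
    rw [← intervalIntegral.integral_of_le hR₀.le,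
      intervalIntegral.integral_eq_sub_of_hasDerivAt_of_le hR₀.le
        (hcont.mono Icc_subset_Ici_self) (fun r hr => hderiv r hr.1)
        ((intervalIntegrable_iff_integrableOn_Ioc_of_le hR₀.le).2
          (hint.mono_set Ioc_subset_Ioi_self)), hm.radialFlux_zero, sub_zero]
  have hV_supp : ∫ r in Ioi 0, V r = ∫ r in Ioc 0 R₀, V r :=
    setIntegral_Ioi_eq_setIntegral_Ioc fun r hr => by simp [hV, hv_supp r hr.le]
  rw [← integral_const_mul]
  constructor
  · rw [← htotal, integral_add hP_int hV_int, hV_supp]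
    ring
  · calc ∫ r in Ioc 0 R₀, V r ≤ ∫ r in Ioc 0 R₀, (P r + V r) :=
          setIntegral_mono_on (hV_int.mono_set Ioc_subset_Ioi_self)
            (hint.mono_set Ioc_subset_Ioi_self) measurableSet_Ioc
            fun r _ => le_add_of_nonneg_left (by positivity)
      _ = (R₀ - m R₀) / R₀ * (R₀ - (R₀ - m R₀)) := by
          rw [hinner, hm.radialFlux_eq_of_le hR₀ le_rfl]
          field_simp

end ZeroEnergyScattering

lemma integral_fun_norm_euclideanSpace_fin_three (f : ℝ → ℝ) :
    ∫ x : EuclideanSpace ℝ (Fin 3), f ‖x‖ = 4 * π * ∫ r in Ioi 0, r ^ 2 * f r := by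
  rw [integral_fun_norm_addHaar, measureReal_def, EuclideanSpace.volume_ball_fin_three,
    finrank_euclideanSpace_fin]
  simp only [ENNReal.ofReal_one, one_pow, one_mul, nsmul_eq_mul, smul_eq_mul,
    ENNReal.toReal_ofReal (by positivity : 0 ≤ π * 4 / 3)]
  ring

lemma norm_fderiv_comp_norm {E : Type*} [NormedAddCommGroup E] [InnerProductSpace ℝ E]
    {g : ℝ → ℝ} {x : E} (hx : x ≠ 0) (hg : DifferentiableAt ℝ g ‖x‖) :
    ‖fderiv ℝ (fun y => g ‖y‖) x‖ = |deriv g ‖x‖| := by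
  have : Nontrivial E := ⟨⟨x, 0, hx⟩⟩
  have hn : DifferentiableAt ℝ (‖·‖) x := (contDiffAt_norm ℝ hx).differentiableAt one_ne_zero
  have h : HasFDerivAt (fun y => g ‖y‖) (deriv g ‖x‖ • fderiv ℝ (‖·‖) x) x :=
    hg.hasDerivAt.comp_hasFDerivAt x hn.hasFDerivAt
  rw [h.fderiv, norm_smul, norm_fderiv_norm hn, mul_one, Real.norm_eq_abs]

theorem scattering_function_energy_identity_general
    (R₀ μ : ℝ) (hR₀ : 0 < R₀) (hμ : 0 < μ)
    (v : ℝ → ℝ) (hv_nonneg : ∀ r, 0 ≤ v r)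
    (hv_supp : ∀ r, R₀ ≤ r → v r = 0)
    (m : ℝ → ℝ) (hm : ZeroEnergyScattering v R₀ μ m) :
    (0 ≤ (R₀ - m R₀) - ∫ r in Set.Ioi (0 : ℝ), (deriv (fun s => m s / s) r) ^ 2 * r ^ 2) ∧
    ((R₀ - m R₀) - (∫ r in Set.Ioi (0 : ℝ), (deriv (fun s => m s / s) r) ^ 2 * r ^ 2)
      = (1 / μ) * ∫ r in Set.Ioc (0 : ℝ) R₀, v r * (m r / r) ^ 2 * r ^ 2) ∧
    ((1 / μ) * (∫ r in Set.Ioc (0 : ℝ) R₀, v r * (m r / r) ^ 2 * r ^ 2)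
      ≤ (R₀ - m R₀) / R₀ * (R₀ - (R₀ - m R₀))) ∧
    (0 ≤ (R₀ - m R₀) - (1 / (4 * Real.pi)) *
        ∫ x : EuclideanSpace ℝ (Fin 3),
          ‖fderiv ℝ (fun y : EuclideanSpace ℝ (Fin 3) => m ‖y‖ / ‖y‖) x‖ ^ 2) ∧
    ((R₀ - m R₀) - (1 / (4 * Real.pi)) *
        (∫ x : EuclideanSpace ℝ (Fin 3),
          ‖fderiv ℝ (fun y : EuclideanSpace ℝ (Fin 3) => m ‖y‖ / ‖y‖) x‖ ^ 2)
      = (1 / (4 * Real.pi * μ)) *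
        ∫ x : EuclideanSpace ℝ (Fin 3), v ‖x‖ * (m ‖x‖ / ‖x‖) ^ 2) ∧
    ((1 / (4 * Real.pi * μ)) *
        (∫ x : EuclideanSpace ℝ (Fin 3), v ‖x‖ * (m ‖x‖ / ‖x‖) ^ 2)
      ≤ (R₀ - m R₀) / R₀ * (R₀ - (R₀ - m R₀))) := by
  obtain ⟨hid, hub⟩ := hm.radial_energy_identity hR₀ hμ hv_nonneg hv_supp
  have hpot_nonneg : 0 ≤ ∫ r in Ioc 0 R₀, v r * (m r / r) ^ 2 * r ^ 2 :=
    setIntegral_nonneg measurableSet_Ioc fun r _ => by have := hv_nonneg r; positivity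
  have hgrad : ∫ x : EuclideanSpace ℝ (Fin 3),
      ‖fderiv ℝ (fun y : EuclideanSpace ℝ (Fin 3) => m ‖y‖ / ‖y‖) x‖ ^ 2
      = 4 * π * ∫ r in Ioi 0, (deriv (fun s => m s / s) r) ^ 2 * r ^ 2 := by
    rw [integral_congr_ae (g := fun x => (deriv (fun s => m s / s) ‖x‖) ^ 2),
      integral_fun_norm_euclideanSpace_fin_three (fun r => (deriv (fun s => m s / s) r) ^ 2)]
    · exact congrArg _ (integral_congr_ae (ae_of_all _ fun r => mul_comm _ _))
    filter_upwards [volume.ae_ne 0] with x hx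
    have hx0 : 0 < ‖x‖ := norm_pos_iff.2 hx
    rw [norm_fderiv_comp_norm (g := fun s => m s / s) hx
      ((hm.diff _ hx0).div differentiableAt_id hx0.ne'), sq_abs]
  have hpot : ∫ x : EuclideanSpace ℝ (Fin 3), v ‖x‖ * (m ‖x‖ / ‖x‖) ^ 2
      = 4 * π * ∫ r in Ioc 0 R₀, v r * (m r / r) ^ 2 * r ^ 2 := by
    rw [integral_fun_norm_euclideanSpace_fin_three (fun r => v r * (m r / r) ^ 2),
      setIntegral_Ioi_eq_setIntegral_Ioc (b := R₀) fun r hr => by simp [hv_supp r hr.le]]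
    exact congrArg _ (integral_congr_ae (ae_of_all _ fun r => by ring))
  have hπ : π ≠ 0 := pi_ne_zero
  rw [hgrad, hpot, show ∀ t : ℝ, 1 / (4 * π) * (4 * π * t) = t from fun t => by field_simp,
    show ∀ t : ℝ, 1 / (4 * π * μ) * (4 * π * t) = 1 / μ * t from fun t => by field_simp]
  have hnonneg : 0 ≤ 1 / μ * ∫ r in Ioc 0 R₀, v r * (m r / r) ^ 2 * r ^ 2 :=
    mul_nonneg (by positivity) hpot_nonneg
  exact ⟨hid ▸ hnonneg, hid, hub, hid ▸ hnonneg, hid, hub⟩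

/-- **Energy identity for the scattering function.**  With `f(r) = m(r)/r` and
`𝔞₀^μ = R₀ - m(R₀)`, one has
`0 ≤ 𝔞₀^μ - ∫₀^∞ f'(r)² r² dr = (1/μ)∫₀^{R₀} v f² r² dr ≤ (𝔞₀^μ/R₀)(𝔠₀ - 𝔞₀^μ)`,
together with the equivalent three-dimensional formulation for the radial function
`x ↦ f(|x|)` on `ℝ³`. -/
theorem scattering_function_energy_identity
    (R₀ μ : ℝ) (hR₀ : 0 < R₀) (hμ : 0 < μ)
    (v : ℝ → ℝ) (hv_meas : Measurable v) (hv_nonneg : ∀ r, 0 ≤ v r)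
    (hv_bdd : BddAbove (Set.range v))
    (hv_supp : ∀ r, R₀ ≤ r → v r = 0)
    (m : ℝ → ℝ) (hm : ZeroEnergyScattering v R₀ μ m) :
    (0 ≤ (R₀ - m R₀) - ∫ r in Set.Ioi (0 : ℝ), (deriv (fun s => m s / s) r) ^ 2 * r ^ 2) ∧
    ((R₀ - m R₀) - (∫ r in Set.Ioi (0 : ℝ), (deriv (fun s => m s / s) r) ^ 2 * r ^ 2)
      = (1 / μ) * ∫ r in Set.Ioc (0 : ℝ) R₀, v r * (m r / r) ^ 2 * r ^ 2) ∧
    ((1 / μ) * (∫ r in Set.Ioc (0 : ℝ) R₀, v r * (m r / r) ^ 2 * r ^ 2)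
      ≤ (R₀ - m R₀) / R₀ * (R₀ - (R₀ - m R₀))) ∧
    (0 ≤ (R₀ - m R₀) - (1 / (4 * Real.pi)) *
        ∫ x : EuclideanSpace ℝ (Fin 3),
          ‖fderiv ℝ (fun y : EuclideanSpace ℝ (Fin 3) => m ‖y‖ / ‖y‖) x‖ ^ 2) ∧
    ((R₀ - m R₀) - (1 / (4 * Real.pi)) *
        (∫ x : EuclideanSpace ℝ (Fin 3),
          ‖fderiv ℝ (fun y : EuclideanSpace ℝ (Fin 3) => m ‖y‖ / ‖y‖) x‖ ^ 2)
      = (1 / (4 * Real.pi * μ)) *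
        ∫ x : EuclideanSpace ℝ (Fin 3), v ‖x‖ * (m ‖x‖ / ‖x‖) ^ 2) ∧
    ((1 / (4 * Real.pi * μ)) *
        (∫ x : EuclideanSpace ℝ (Fin 3), v ‖x‖ * (m ‖x‖ / ‖x‖) ^ 2)
      ≤ (R₀ - m R₀) / R₀ * (R₀ - (R₀ - m R₀))) :=
  scattering_function_energy_identity_general R₀ μ hR₀ hμ v hv_nonneg hv_supp m hm
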